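/- Let A be a d×d binary (adjacency) matrix, X_A the associated one-sided Markov shift and T_A the hom tree-shift of X_A. Then X_A is topologically mixing if and only if T_A is uniform CPC-block gluing (CPC UBG). -/

import Mathlib

namespace TreeShiftPaper

/-- Words over the alphabet `Σ = {0, …, k-1}`: nodes of the `k`-tree. -/
abbrev Word (k : ℕ) := List (Fin k)

variable {k : ℕ} {A : Type*}

/-- A set of words is prefix-closed if it contains every prefix of each of its elements. -/
def PrefixClosed (S : Set (Word k)) : Prop :=
  ∀ w ∈ S, ∀ v : Word k, v <+: w → v ∈ S

/-- The pattern with support `S` and labels `u` appears in the labeled tree `t`. -/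
def PatternAppears (t : Word k → A) (S : Set (Word k)) (u : Word k → A) : Prop :=
  ∃ s : Word k, ∀ w ∈ S, t (s ++ w) = u w

/-- The set of labeled trees avoiding every pattern of the forbidden family `F`. -/
def treeShiftOf (F : Set ((Set (Word k)) × (Word k → A))) : Set (Word k → A) :=
  {t | ∀ p ∈ F, ¬ PatternAppears t p.1 p.2}

/-- `T` is a tree-shift: it is defined by some forbidden set of patterns
(each with finite prefix-closed support). -/
def IsTreeShift (T : Set (Word k → A)) : Prop :=
  ∃ F : Set ((Set (Word k)) × (Word k → A)),
    (∀ p ∈ F, p.1.Finite ∧ PrefixClosed p.1) ∧ T = treeShiftOf F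

/-- `T` is a tree-shift of finite type: the forbidden set can be chosen finite. -/
def IsTreeSFT (T : Set (Word k → A)) : Prop :=
  ∃ F : Set ((Set (Word k)) × (Word k → A)),
    F.Finite ∧ (∀ p ∈ F, p.1.Finite ∧ PrefixClosed p.1) ∧ T = treeShiftOf F

/-- The finite word `w` occurs in the one-sided sequence `x` at position `i`. -/
def OccursAt (x : ℕ → A) (i : ℕ) (w : List A) : Prop :=
  ∀ j : Fin w.length, x (i + (j : ℕ)) = w.get j

/-- The one-sided shift space defined by the forbidden set of words `F`. -/
def shiftOf (F : Set (List A)) : Set (ℕ → A) :=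
  {x | ∀ w ∈ F, ∀ i : ℕ, ¬ OccursAt x i w}

/-- `X` is a one-sided shift space. -/
def IsShift (X : Set (ℕ → A)) : Prop := ∃ F : Set (List A), X = shiftOf F

/-- `X` is a one-sided shift of finite type. -/
def IsSFT (X : Set (ℕ → A)) : Prop :=
  ∃ F : Set (List A), F.Finite ∧ X = shiftOf F

/-- A chain: an infinite path in the tree starting at the root. -/
def IsChain (c : ℕ → Word k) : Prop :=
  c 0 = [] ∧ ∀ n : ℕ, ∃ i : Fin k, c (n + 1) = c n ++ [i]

/-- The hom tree-shift associated with a one-sided shift space `X`: labeled trees whose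
projection along every chain lies in `X`. -/
def homTree (k : ℕ) (X : Set (ℕ → A)) : Set (Word k → A) :=
  {t | ∀ c : ℕ → Word k, IsChain c → (fun n => t (c n)) ∈ X}

/-- `Y` is a sofic one-sided shift: image of an SFT under a sliding block code induced
by an `n`-block map. -/
def IsSofic (Y : Set (ℕ → A)) : Prop :=
  ∃ (B : Type) (_ : Fintype B) (X : Set (ℕ → B)) (n : ℕ) (f : (ℕ → B) → A),
    IsSFT X ∧ (∀ u v : ℕ → B, (∀ j < n, u j = v j) → f u = f v) ∧
    (fun x : ℕ → B => fun i => f (fun j => x (i + j))) '' X = Y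

/-- `T` is a sofic tree-shift: image of a tree-SFT under the map induced by an
`n`-block map. -/
def IsSoficTree (T : Set (Word k → A)) : Prop :=
  ∃ (B : Type) (_ : Fintype B) (T' : Set (Word k → B)) (n : ℕ) (g : (Word k → B) → A),
    IsTreeSFT T' ∧
    (∀ u v : Word k → B, (∀ w : Word k, w.length ≤ n → u w = v w) → g u = g v) ∧
    (fun t : Word k → B => fun w => g (fun z => t (w ++ z))) '' T' = T

/-- The Markov tree-shift determined by `k` binary `d × d` transition matrices. -/
def markovTree (k d : ℕ) (M : Fin k → Matrix (Fin d) (Fin d) Bool) :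
    Set (Word k → Fin d) :=
  {t | ∀ w : Word k, ∀ i : Fin k, M i (t w) (t (w ++ [i])) = true}

/-- The one-sided Markov (vertex) shift determined by a binary `d × d` matrix. -/
def markovShift (d : ℕ) (M : Matrix (Fin d) (Fin d) Bool) : Set (ℕ → Fin d) :=
  {x | ∀ i : ℕ, M (x i) (x (i + 1)) = true}

/-- The pattern with support `S` and labels `u` is admissible in `T`. -/
def AdmissiblePattern (T : Set (Word k → A)) (S : Set (Word k)) (u : Word k → A) : Prop :=
  ∃ t ∈ T, ∃ s : Word k, ∀ w ∈ S, t (s ++ w) = u w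

/-- The `n`-block `u` (a labeling of `Δ_n`) is admissible in `T`. -/
def AdmissibleBlock (T : Set (Word k → A)) (n : ℕ) (u : Word k → A) : Prop :=
  ∃ t ∈ T, ∃ s : Word k, ∀ w : Word k, w.length ≤ n → t (s ++ w) = u w

/-- Word distance on the `k`-tree:
`d(x,y) = |x| + |y| - 2 · max{|w| : w` a common prefix of `x` and `y}`. -/
noncomputable def wordDist (x y : Word k) : ℕ :=
  x.length + y.length - 2 * sSup {m : ℕ | ∃ w : Word k, w <+: x ∧ w <+: y ∧ w.length = m}

/-- The boundary `∂S = {w ∈ S : wΣ ∩ S = ∅}` of a support `S`. -/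
def boundary (S : Set (Word k)) : Set (Word k) :=
  {w | w ∈ S ∧ ∀ i : Fin k, w ++ [i] ∉ S}

/-- A complete prefix code: a finite prefix set such that every word of length at least
`max_{z ∈ P} |z|` has a prefix in `P`. -/
def IsCPC (P : Set (Word k)) : Prop :=
  P.Finite ∧ (∀ x ∈ P, ∀ y ∈ P, x <+: y → x = y) ∧
  ∀ w : Word k, (∀ z ∈ P, z.length ≤ w.length) → ∃ x ∈ P, x <+: w

/-- Strong irreducibility with gap `N`. -/
def SIGap (T : Set (Word k → A)) (N : ℕ) : Prop :=
  ∀ (Su Sv : Set (Word k)) (u v : Word k → A),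
    Su.Finite → PrefixClosed Su → Sv.Finite → PrefixClosed Sv →
    AdmissiblePattern T Su u → AdmissiblePattern T Sv v →
    ∀ w : Word k, (∀ h ∈ Su, N ≤ wordDist w h) →
      ∃ t ∈ T, (∀ z ∈ Su, t z = u z) ∧ ∀ z ∈ Sv, t (w ++ z) = v z

/-- `T` is strongly irreducible (SI). -/
def SI (T : Set (Word k → A)) : Prop := ∃ N : ℕ, SIGap T N

/-- `T` is block gluing (BG). -/
def BG (T : Set (Word k → A)) : Prop :=
  ∃ N : ℕ, ∀ (n m : ℕ) (u v : Word k → A),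
    AdmissibleBlock T n u → AdmissibleBlock T m v →
    ∀ w : Word k, N + n ≤ w.length →
      ∃ t ∈ T, (∀ z : Word k, z.length ≤ n → t z = u z) ∧
        ∀ z : Word k, z.length ≤ m → t (w ++ z) = v z

/-- `T` is topologically mixing (TM). -/
def TM (T : Set (Word k → A)) : Prop :=
  ∀ H₁ H₂ : Set (Word k), H₁.Finite → H₂.Finite →
    ∃ N : ℕ, ∀ t₁ ∈ T, ∀ t₂ ∈ T, ∀ w : Word k, (∀ h ∈ H₁, N ≤ wordDist w h) →
      ∃ t ∈ T, (∀ z ∈ H₁, t z = t₁ z) ∧ ∀ z ∈ H₂, t (w ++ z) = t₂ z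

/-- `T` is irreducible (IR). -/
def IR (T : Set (Word k → A)) : Prop :=
  ∀ (n m : ℕ) (u v : Word k → A),
    AdmissibleBlock T n u → AdmissibleBlock T m v →
    ∃ w : Word k, n < w.length ∧
      ∃ t ∈ T, (∀ z : Word k, z.length ≤ n → t z = u z) ∧
        ∀ z : Word k, z.length ≤ m → t (w ++ z) = v z

/-- `T` is CPC-strongly irreducible via the prefix set `P`. -/
def CPCSIWith (T : Set (Word k → A)) (P : Set (Word k)) : Prop :=
  ∀ (Su Sv : Set (Word k)) (u v : Word k → A),
    Su.Finite → PrefixClosed Su → Sv.Finite → PrefixClosed Sv →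
    AdmissiblePattern T Su u → AdmissiblePattern T Sv v →
    ∃ t ∈ T, (∀ z ∈ Su, t z = u z) ∧
      ∀ w ∈ boundary Su, ∀ z ∈ P, ∀ y ∈ Sv, t (w ++ z ++ y) = v y

/-- `T` is CPC-strongly irreducible (CPC SI). -/
def CPCSI (T : Set (Word k → A)) : Prop := ∃ P : Set (Word k), IsCPC P ∧ CPCSIWith T P

/-- `T` is uniform CPC-strongly irreducible (CPC USI): CPC SI with `P = Σ^N`. -/
def CPCUSI (T : Set (Word k → A)) : Prop :=
  ∃ N : ℕ, CPCSIWith T {z : Word k | z.length = N}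

/-- `T` is CPC-block gluing via the prefix set `P`. -/
def CPCBGWith (T : Set (Word k → A)) (P : Set (Word k)) : Prop :=
  ∀ (n m : ℕ) (u v : Word k → A),
    AdmissibleBlock T n u → AdmissibleBlock T m v →
    ∃ t ∈ T, (∀ z : Word k, z.length ≤ n → t z = u z) ∧
      ∀ w : Word k, w.length = n → ∀ z ∈ P, ∀ y : Word k, y.length ≤ m →
        t (w ++ z ++ y) = v y

/-- `T` is CPC-block gluing (CPC BG). -/
def CPCBG (T : Set (Word k → A)) : Prop := ∃ P : Set (Word k), IsCPC P ∧ CPCBGWith T P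

/-- `T` is uniform CPC-block gluing (CPC UBG): CPC BG with `P = Σ^N`. -/
def CPCUBG (T : Set (Word k → A)) : Prop :=
  ∃ N : ℕ, CPCBGWith T {z : Word k | z.length = N}

/-- `T` is CPC-irreducible (CPC IR). -/
def CPCIR (T : Set (Word k → A)) : Prop :=
  ∀ (n m : ℕ) (u v : Word k → A),
    AdmissibleBlock T n u → AdmissibleBlock T m v →
    ∃ P : Set (Word k), IsCPC P ∧ (∀ z ∈ P, n + 1 ≤ z.length) ∧
      ∃ t ∈ T, (∀ z : Word k, z.length ≤ n → t z = u z) ∧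
        ∀ w ∈ P, ∀ y : Word k, y.length ≤ m → t (w ++ y) = v y

/-- The finite word `u` is admissible in the one-sided shift space `X`. -/
def WordAdmissible (X : Set (ℕ → A)) (u : List A) : Prop :=
  ∃ x ∈ X, ∃ i : ℕ, OccursAt x i u

/-- The one-sided shift space `X` is topologically mixing. -/
def MixingShift (X : Set (ℕ → A)) : Prop :=
  ∀ u v : List A, WordAdmissible X u → WordAdmissible X v →
    ∃ N : ℕ, ∀ n ≥ N, ∃ x ∈ X, OccursAt x 0 u ∧ OccursAt x (u.length + n) v

/-- The one-sided shift space `X` is transitive (irreducible). -/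
def TransitiveShift (X : Set (ℕ → A)) : Prop :=
  ∀ u v : List A, WordAdmissible X u → WordAdmissible X v →
    ∃ x ∈ X, ∃ n : ℕ, u.length ≤ n ∧ OccursAt x 0 u ∧ OccursAt x n v

end TreeShiftPaper

/-! For `k ≥ 1` the hom tree-shift of `X_M` is the Markov tree-shift in which every edge obeys `M`.
If `X_M` is mixing, any two admissible symbols are joined by paths of every length `≥ N + 1`, so an
`n`-block `u` is glued to copies of an `m`-block `v` at all nodes of level `n + N + 1` by grafting,
below each node of level `n`, a level-constant tree that walks from its label to the root label of
`v`. Conversely, level-constant trees built from occurrences of words `u` and `v` are admissible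
blocks, and reading a glued tree along the branch `0 0 0 …` gives a point of `X_M` with `u` at `0`
and `v` at any prescribed position `≥ |u| + N`. -/

namespace TreeShiftPaper

variable {k d : ℕ} {A : Type*}

theorem occursAt_singleton {x : ℕ → A} {i : ℕ} {a : A} : OccursAt x i [a] ↔ x i = a := by
  refine ⟨fun h => h ⟨0, Nat.one_pos⟩, fun h j => ?_⟩
  match j with
  | ⟨0, _⟩ => exact h

theorem wordAdmissible_singleton {X : Set (ℕ → A)} {a : A} :
    WordAdmissible X [a] ↔ ∃ x ∈ X, ∃ i, x i = a := by
  simp only [WordAdmissible, occursAt_singleton]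

theorem MixingShift.exists_uniform_gap [Finite A] {X : Set (ℕ → A)} (hX : MixingShift X) :
    ∃ N, ∀ a b : A, WordAdmissible X [a] → WordAdmissible X [b] →
      ∀ n ≥ N, ∃ x ∈ X, x 0 = a ∧ x (n + 1) = b := by
  have gap : ∀ p : A × A, ∃ N, WordAdmissible X [p.1] → WordAdmissible X [p.2] →
      ∀ n ≥ N, ∃ x ∈ X, x 0 = p.1 ∧ x (n + 1) = p.2 := by
    rintro ⟨a, b⟩
    by_cases hab : WordAdmissible X [a] ∧ WordAdmissible X [b]
    · obtain ⟨N, hN⟩ := hX [a] [b] hab.1 hab.2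
      refine ⟨N, fun _ _ n hn => ?_⟩
      obtain ⟨x, hx, ha, hb⟩ := hN n hn
      refine ⟨x, hx, occursAt_singleton.mp ha, occursAt_singleton.mp ?_⟩
      rwa [List.length_singleton, Nat.add_comm] at hb
    · exact ⟨0, fun ha hb => absurd ⟨ha, hb⟩ hab⟩
  choose N hN using gap
  obtain ⟨B, hB⟩ := (Set.finite_range N).bddAbove
  exact ⟨B, fun a b ha hb n hn => hN (a, b) ha hb n (le_trans (hB ⟨(a, b), rfl⟩) hn)⟩

/-- The chain through `s`, continued by the letter `i₀` below `s`. -/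
def chainThrough (i₀ : Fin k) (s : Word k) : ℕ → Word k :=
  fun j => List.ofFn fun m : Fin j => s.getD m i₀

theorem isChain_chainThrough (i₀ : Fin k) (s : Word k) : IsChain (chainThrough i₀ s) :=
  ⟨rfl, fun j => ⟨s.getD j i₀, List.ofFn_succ_last⟩⟩

theorem chainThrough_of_le_length (i₀ : Fin k) {s : Word k} {j : ℕ} (hj : j ≤ s.length) :
    chainThrough i₀ s j = s.take j := by
  refine List.ext_getElem (by simp [chainThrough, hj]) fun m _ hm => ?_
  rw [List.length_take] at hm
  simp [chainThrough, List.getElem?_eq_getElem (show m < s.length by omega)]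

def levelTree (x : ℕ → A) : Word k → A := fun w => x w.length

def graft (n : ℕ) (t : Word k → A) (s : Word k → Word k → A) : Word k → A :=
  fun w => if w.length < n then t w else s (w.take n) (w.drop n)

section Graft

variable {n : ℕ} {t : Word k → A} {s : Word k → Word k → A}

theorem graft_append {w : Word k} (hw : w.length = n) (y : Word k) :
    graft n t s (w ++ y) = s w y := by
  simp [graft, hw, List.take_left', List.drop_left']

theorem graft_of_length_le (hst : ∀ w : Word k, w.length = n → s w [] = t w) {w : Word k}
    (hw : w.length ≤ n) : graft n t s w = t w := by
  rcases hw.lt_or_eq with hw | hw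
  · simp [graft, hw]
  · simpa [hst w hw] using graft_append (t := t) (s := s) hw []

theorem graft_mem_markovTree {Ms : Fin k → Matrix (Fin d) (Fin d) Bool} {t : Word k → Fin d}
    {s : Word k → Word k → Fin d} (ht : t ∈ markovTree k d Ms)
    (hs : ∀ w : Word k, w.length = n → s w ∈ markovTree k d Ms)
    (hst : ∀ w : Word k, w.length = n → s w [] = t w) :
    graft n t s ∈ markovTree k d Ms := by
  intro w i
  rcases lt_or_ge w.length n with hw | hw
  · rw [graft_of_length_le hst hw.le, graft_of_length_le hst (by simpa using hw)]
    exact ht w i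
  · rw [← List.take_append_drop n w, List.append_assoc, graft_append (by simpa using hw),
      graft_append (by simpa using hw)]
    exact hs _ (by simpa using hw) _ i

end Graft

theorem shift_mem_markovTree {Ms : Fin k → Matrix (Fin d) (Fin d) Bool} {t : Word k → Fin d}
    (ht : t ∈ markovTree k d Ms) (s : Word k) :
    (fun w => t (s ++ w)) ∈ markovTree k d Ms := fun w i => by
  simpa only [List.append_assoc] using ht (s ++ w) i

section Markov

variable {M : Matrix (Fin d) (Fin d) Bool}

theorem shift_mem_markovShift {x : ℕ → Fin d} (hx : x ∈ markovShift d M) (i : ℕ) :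
    (fun j => x (i + j)) ∈ markovShift d M :=
  fun j => hx (i + j)

theorem homTree_markovShift : homTree k (markovShift d M) = markovTree k d fun _ => M := by
  ext t
  refine ⟨fun ht w i => ?_, fun ht c hc j => ?_⟩
  · have edge := ht _ (isChain_chainThrough i (w ++ [i])) w.length
    simp only [chainThrough_of_le_length i (show w.length ≤ (w ++ [i]).length by simp),
      chainThrough_of_le_length i (show w.length + 1 ≤ (w ++ [i]).length by simp),
      List.take_left', List.take_of_length_le (show (w ++ [i]).length ≤ w.length + 1 by simp)]
      at edge
    exact edge
  · obtain ⟨i, hi⟩ := hc.2 j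
    simpa only [hi] using ht (c j) i

variable {t : Word k → Fin d}

theorem levelTree_mem_markovTree {x : ℕ → Fin d} (hx : x ∈ markovShift d M) :
    levelTree x ∈ markovTree k d fun _ => M := fun w _ => by
  simpa [levelTree] using hx w.length

theorem ray_mem_markovShift (ht : t ∈ markovTree k d fun _ => M) (w : Word k) (i₀ : Fin k) :
    (fun j => t (w ++ List.replicate j i₀)) ∈ markovShift d M := fun j => by
  simpa only [List.replicate_succ', List.append_assoc] using ht (w ++ List.replicate j i₀) i₀

theorem wordAdmissible_of_mem_markovTree (hk : 0 < k) (ht : t ∈ markovTree k d fun _ => M)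
    (w : Word k) : WordAdmissible (markovShift d M) [t w] :=
  wordAdmissible_singleton.mpr ⟨_, ray_mem_markovShift ht w ⟨0, hk⟩, 0, by simp⟩

theorem cpcubg_markovTree_of_mixingShift (hk : 0 < k) (hX : MixingShift (markovShift d M)) :
    CPCUBG (markovTree k d fun _ => M) := by
  obtain ⟨N, hN⟩ := hX.exists_uniform_gap
  refine ⟨N + 1, fun n m u v ⟨tu, htu, su, hu⟩ ⟨tv, htv, sv, hv⟩ => ?_⟩
  set U : Word k → Fin d := fun w => tu (su ++ w)
  set V : Word k → Fin d := fun y => tv (sv ++ y)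
  have hU := shift_mem_markovTree htu su
  have hV := shift_mem_markovTree htv sv
  have path : ∀ w, ∃ x ∈ markovShift d M, x 0 = U w ∧ x (N + 1) = V [] := fun w =>
    hN _ _ (wordAdmissible_of_mem_markovTree hk hU w)
      (wordAdmissible_of_mem_markovTree hk hV []) N le_rfl
  choose p hp hp0 hpN using path
  set S : Word k → Word k → Fin d := fun w => graft (N + 1) (levelTree (p w)) fun _ => V
  have hpV : ∀ w, ∀ z : Word k, z.length = N + 1 → V [] = levelTree (p w) z := fun w z hz => by
    simp [levelTree, hz, hpN]
  have hS : ∀ w, S w ∈ markovTree k d fun _ => M := fun w =>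
    graft_mem_markovTree (levelTree_mem_markovTree (hp w)) (fun _ _ => hV) (hpV w)
  have hSU : ∀ w, S w [] = U w := fun w =>
    (graft_of_length_le (hpV w) (Nat.zero_le _)).trans (hp0 w)
  refine ⟨graft n U S, graft_mem_markovTree hU (fun w _ => hS w) (fun w _ => hSU w),
    fun z hz => ?_, fun w hw z hz y hy => ?_⟩
  · rw [graft_of_length_le (fun w _ => hSU w) hz]
    exact hu z hz
  · rw [List.append_assoc, graft_append hw]
    exact (graft_append hz y).trans (hv y hy)

theorem mixingShift_of_cpcubg_markovTree (hk : 0 < k)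
    (h : CPCUBG (markovTree k d fun _ => M)) : MixingShift (markovShift d M) := by
  obtain ⟨N, hglue⟩ := h
  rintro u v ⟨xu, hxu, iu, hu⟩ ⟨xv, hxv, iv, hv⟩
  refine ⟨N, fun n hn => ?_⟩
  have block : ∀ x ∈ markovShift d M, ∀ i m,
      AdmissibleBlock (markovTree k d fun _ => M) m (levelTree fun j => x (i + j)) :=
    fun x hx i _ => ⟨_, levelTree_mem_markovTree (shift_mem_markovShift hx i), [], fun _ _ => rfl⟩
  -- the block of `u` is taken deep enough that the gap left before `v` is exactly `N`
  set D := u.length + n - N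
  obtain ⟨t, ht, htu, htv⟩ :=
    hglue D v.length _ _ (block xu hxu iu D) (block xv hxv iv v.length)
  set i₀ : Fin k := ⟨0, hk⟩
  refine ⟨_, ray_mem_markovShift ht [] i₀, fun j => ?_, fun j => ?_⟩
  · have hj : (List.replicate j i₀).length ≤ D := by rw [List.length_replicate]; omega
    simpa [htu _ hj, levelTree] using hu j
  · have split : List.replicate (u.length + n + j) i₀ =
        List.replicate D i₀ ++ List.replicate N i₀ ++ List.replicate j i₀ := by
      rw [← List.replicate_add, ← List.replicate_add]
      congr 1
      omega
    show t ([] ++ List.replicate (u.length + n + j) i₀) = v.get j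
    rw [List.nil_append, split, htv _ (List.length_replicate ..) _ (List.length_replicate ..) _
      (by simp)]
    simpa [levelTree] using hv j

end Markov

/-- For an adjacency matrix `A`: the Markov shift `X_A` is topologically mixing iff the
hom tree-shift `T_A` is uniform CPC-block gluing. -/
theorem stmt15 {k : ℕ} (hk : 2 ≤ k) (d : ℕ) (M : Matrix (Fin d) (Fin d) Bool) :
    MixingShift (markovShift d M) ↔ CPCUBG (homTree k (markovShift d M)) := by
  rw [homTree_markovShift]
  exact ⟨cpcubg_markovTree_of_mixingShift (by omega), mixingShift_of_cpcubg_markovTree (by omega)⟩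

end TreeShiftPaper
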